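/- Let n ≥ 1, (a_1,...,a_{n+2}) positive integers, and ε ∈ {1,-1}. Then M_{n+2}(a_1,...,a_{n+2}) = ε·(ST)^2 if and only if M_{n+1}(a_2,...,a_{n+1}, a_{n+2}+a_1+1) = ε·Id, where S = [[0,-1],[1,0]] and T = [[1,1],[0,1]]. -/
import Mathlib


open Matrix

def E (a : ℤ) : Matrix (Fin 2) (Fin 2) ℤ := !![a, -1; 1, 0]

/-- `M [a₁, …, aₙ] = E aₙ * ⋯ * E a₁`. -/
def M (l : List ℤ) : Matrix (Fin 2) (Fin 2) ℤ :=
  (l.map E).foldl (fun acc x => x * acc) 1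

def S : Matrix (Fin 2) (Fin 2) ℤ := !![0, -1; 1, 0]

def T : Matrix (Fin 2) (Fin 2) ℤ := !![1, 1; 0, 1]

def E' (a : ℤ) : Matrix (Fin 2) (Fin 2) ℤ := !![0, 1; -1, a]

lemma E'_mul_E (a : ℤ) : E' a * E a = 1 := by
  ext i j
  fin_cases i <;> fin_cases j <;>
    simp [E, E', Matrix.mul_apply, Fin.sum_univ_two]

lemma E_mul_E' (a : ℤ) : E a * E' a = 1 := by
  ext i j
  fin_cases i <;> fin_cases j <;>
    simp [E, E', Matrix.mul_apply, Fin.sum_univ_two]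

lemma Mfoldl (l : List ℤ) (acc : Matrix (Fin 2) (Fin 2) ℤ) :
    (l.map E).foldl (fun acc x => x * acc) acc = M l * acc := by
  induction l generalizing acc with
  | nil => simp [M]
  | cons a l ih =>
      simp only [List.map_cons, List.foldl_cons, M]
      rw [ih, ih (E a * 1)]
      simp [Matrix.mul_assoc]

lemma M_cons (a : ℤ) (l : List ℤ) : M (a :: l) = M l * E a := by
  simp only [M, List.map_cons, List.foldl_cons]
  rw [Mfoldl]
  simp [M]

lemma M_append_single (l : List ℤ) (a : ℤ) : M (l ++ [a]) = E a * M l := by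
  simp only [M, List.map_append, List.foldl_append, List.map_cons, List.map_nil,
    List.foldl_cons, List.foldl_nil]

lemma id1 (x y : ℤ) : E (y + x + 1) * E' y * (S * T) ^ 2 * E' x = 1 := by
  ext i j
  fin_cases i <;> fin_cases j <;>
    simp [E, E', S, T, pow_two, Matrix.mul_apply, Fin.sum_univ_two] <;> ring

lemma id2 (x y : ℤ) : E y * E' (y + x + 1) * E x = (S * T) ^ 2 := by
  ext i j
  fin_cases i <;> fin_cases j <;>
    simp [E, E', S, T, pow_two, Matrix.mul_apply, Fin.sum_univ_two] <;> ring

lemma key (A : Matrix (Fin 2) (Fin 2) ℤ) (x y ε : ℤ) :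
    E y * A * E x = ε • (S * T) ^ 2 ↔ E (y + x + 1) * A = ε • 1 := by
  constructor
  · intro h
    have : E (y + x + 1) * A
        = E (y + x + 1) * E' y * (E y * A * E x) * E' x := by
      rw [show E (y + x + 1) * E' y * (E y * A * E x) * E' x
          = E (y + x + 1) * (E' y * E y) * A * (E x * E' x) by
        simp [Matrix.mul_assoc], E'_mul_E, E_mul_E']
      simp
    rw [this, h, Matrix.mul_smul, Matrix.smul_mul]
    rw [show E (y + x + 1) * E' y * (S * T) ^ 2 * E' x
        = E (y + x + 1) * E' y * ((S * T) ^ 2 * E' x) by simp [Matrix.mul_assoc]] at *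
    rw [← Matrix.mul_assoc, id1 x y]
  · intro h
    have : E y * A * E x = E y * E' (y + x + 1) * (E (y + x + 1) * A) * E x := by
      rw [show E y * E' (y + x + 1) * (E (y + x + 1) * A) * E x
          = E y * (E' (y + x + 1) * E (y + x + 1)) * A * E x by
        simp [Matrix.mul_assoc], E'_mul_E]
      simp
    rw [this, h, Matrix.mul_smul, Matrix.smul_mul, Matrix.mul_one, id2]

theorem stmt15 (n : ℕ) (hn : 1 ≤ n) (x y : ℤ) (m : List ℤ) (hm : m.length = n)
    (hx : 0 < x) (hy : 0 < y) (hpos : ∀ a ∈ m, 0 < a)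
    (ε : ℤ) (hε : ε = 1 ∨ ε = -1) :
    M (x :: m ++ [y]) = ε • (S * T) ^ 2 ↔
      M (m ++ [y + x + 1]) = ε • (1 : Matrix (Fin 2) (Fin 2) ℤ) := by
  rw [show x :: m ++ [y] = x :: (m ++ [y]) by simp, M_cons, M_append_single,
    M_append_single, ← key (M m) x y ε, Matrix.mul_assoc]
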